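/- arXiv:2509.24040 — 2 statements merged into one kernel-verified Lean document; each statement's English description precedes it below -/
import Mathlib

section
/- The Demazure–Lusztig operator satisfies the quadratic Hecke relation (T_i − 1)(T_i + t) = 0: for every polynomial f in x_1,…,x_N over ℚ(t) and 1 ≤ i ≤ N−1, T_i(T_i(f)) − (1−t)·T_i(f) − t·f = 0. -/
noncomputable section

open MvPolynomial

/-- The coefficient field `ℚ(t)`. -/
abbrev Ft : Type := RatFunc ℚ

/-- The field of rational functions in `x_1, …, x_N` over `ℚ(t)`. -/
abbrev KK (N : ℕ) : Type := FractionRing (MvPolynomial (Fin N) Ft)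

/-- The parameter `t`. -/
def tp {N : ℕ} : KK N :=
  algebraMap (MvPolynomial (Fin N) Ft) (KK N) (C RatFunc.X)

/-- The variable `x_i`. -/
def XV {N : ℕ} (i : Fin N) : KK N :=
  algebraMap (MvPolynomial (Fin N) Ft) (KK N) (X i)

/-- The field endomorphism `s` exchanging the variables `x_i` and `x_j`. -/
def swapK {N : ℕ} (i j : Fin N) : KK N →+* KK N :=
  IsFractionRing.lift (g := (algebraMap (MvPolynomial (Fin N) Ft) (KK N)).comp
      (rename (Equiv.swap i j)).toRingHom)
    (by
      rw [RingHom.coe_comp]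
      exact (IsFractionRing.injective _ _).comp
        (rename_injective _ (Equiv.swap i j).injective))

/-- The Demazure–Lusztig operator
`T(f) = s(f) + (1-t) · x_i · (f - s(f)) / (x_i - x_j)` (for `j = i+1`). -/
def TT {N : ℕ} (i j : Fin N) (f : KK N) : KK N :=
  swapK i j f + (1 - tp) * XV i * (f - swapK i j f) / (XV i - XV j)

/-- The Demazure operator `π(f) = (x_i f - s(x_i f)) / (x_i - x_j)`. -/
def dem {N : ℕ} (i j : Fin N) (f : KK N) : KK N :=
  (XV i * f - swapK i j (XV i * f)) / (XV i - XV j)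

/-- The canonical image of a polynomial in the rational function field. -/
def toK {N : ℕ} (f : MvPolynomial (Fin N) Ft) : KK N :=
  algebraMap (MvPolynomial (Fin N) Ft) (KK N) f

/-! The relation holds for `f ↦ s f + (1 - t) x (f - s f) / (x - y)` in any field with an
involutive endomorphism `s` fixing `t` and exchanging `x ≠ y`: applying `s` to `T f` only
produces `f`, `s f`, `t`, `x`, `y`, so clearing the denominator `x - y` leaves a polynomial
identity. -/

section DemazureLusztig

variable {K : Type*} [Field K]

def demazureLusztig (s : K →+* K) (t x y f : K) : K :=
  s f + (1 - t) * x * (f - s f) / (x - y)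

theorem demazureLusztig_quadratic {s : K →+* K} (hs : Function.Involutive s) {t x y : K}
    (ht : s t = t) (hx : s x = y) (hy : s y = x) (hxy : x ≠ y) (f : K) :
    demazureLusztig s t x y (demazureLusztig s t x y f) - (1 - t) * demazureLusztig s t x y f
      - t * f = 0 := by
  have hxy' : x - y ≠ 0 := sub_ne_zero.mpr hxy
  have hyx : y - x = -(x - y) := (neg_sub x y).symm
  simp only [demazureLusztig, map_add, map_sub, map_mul, map_div₀, map_one, hs _, ht, hx, hy,
    hyx, div_neg]
  field_simp
  ring

end DemazureLusztig

theorem swapK_algebraMap {N : ℕ} (i j : Fin N) (p : MvPolynomial (Fin N) Ft) :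
    swapK i j (algebraMap _ (KK N) p) = algebraMap _ (KK N) (rename (Equiv.swap i j) p) :=
  IsFractionRing.lift_algebraMap _ _

theorem swapK_involutive {N : ℕ} (i j : Fin N) : Function.Involutive (swapK i j) := by
  have h : (swapK i j).comp (swapK i j) = RingHom.id _ :=
    IsLocalization.ringHom_ext (nonZeroDivisors (MvPolynomial (Fin N) Ft)) <|
      RingHom.ext fun p => by simp [swapK_algebraMap, rename_rename, ← Equiv.coe_trans]
  exact RingHom.congr_fun h

theorem swapK_XV_left {N : ℕ} (i j : Fin N) : swapK i j (XV i) = XV j := by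
  simp [XV, swapK_algebraMap]

theorem swapK_XV_right {N : ℕ} (i j : Fin N) : swapK i j (XV j) = XV i := by
  simp [XV, swapK_algebraMap]

theorem swapK_tp {N : ℕ} (i j : Fin N) : swapK i j (tp : KK N) = tp := by
  simp [tp, swapK_algebraMap]

theorem XV_injective {N : ℕ} : Function.Injective (XV : Fin N → KK N) :=
  (IsFractionRing.injective (MvPolynomial (Fin N) Ft) (KK N)).comp (X_injective (R := Ft))

theorem TT_quadratic {N : ℕ} {i j : Fin N} (hij : i ≠ j) (g : KK N) :
    TT i j (TT i j g) - (1 - tp) * TT i j g - tp * g = 0 :=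
  demazureLusztig_quadratic (swapK_involutive i j) (swapK_tp i j) (swapK_XV_left i j)
    (swapK_XV_right i j) (XV_injective.ne hij) g

/-- quadratic Hecke relation `(T_i - 1)(T_i + t) = 0`:
for every polynomial `f` in `x_1, …, x_N` over `ℚ(t)`,
`T_i (T_i f) - (1-t) · T_i f - t · f = 0` (indices 0-based). -/
theorem heckeT_quadratic (N i : ℕ) (hi : i + 1 < N)
    (f : MvPolynomial (Fin N) Ft) :
    TT ⟨i, by omega⟩ ⟨i + 1, hi⟩ (TT ⟨i, by omega⟩ ⟨i + 1, hi⟩ (toK f)) -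
        (1 - tp) * TT ⟨i, by omega⟩ ⟨i + 1, hi⟩ (toK f) - tp * toK f = 0 :=
  TT_quadratic (by simp [Fin.ext_iff]) (toK f)

end
end

section
/- The Demazure–Lusztig operators satisfy the braid relation: for every polynomial f in x_1,…,x_N over ℚ(t) and every 1 ≤ i ≤ N−2, T_i(T_{i+1}(T_i(f))) = T_{i+1}(T_i(T_{i+1}(f))). -/
noncomputable section

open MvPolynomial

/-! The transpositions `s = (i i+1)` and `u = (i+1 i+2)` act on `ℚ(t)(x)` by field automorphisms
with `s² = u² = 1` and `sus = usu`, and `T_s f = A f + B s(f)` with coefficients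
`A = (1-t)x_i/(x_i-x_{i+1})`, `B = (t x_i - x_{i+1})/(x_i-x_{i+1})`. Pushing `s` and `u` through
the coefficients expresses both sides of the braid relation in the six values
`f, s f, u f, su f, us f, sus f = usu f`; what remains is an identity of rational functions in
`x_i, x_{i+1}, x_{i+2}, t`. -/

section

variable {K : Type*} [Field K]

theorem demazureLusztig_braid (s u : K →+* K) {t x y z : K}
    (hss : ∀ f, s (s f) = f) (huu : ∀ f, u (u f) = f)
    (hsus : ∀ f, u (s (u f)) = s (u (s f)))
    (hsx : s x = y) (hsy : s y = x) (hsz : s z = z) (hst : s t = t)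
    (hux : u x = x) (huy : u y = z) (huz : u z = y) (hut : u t = t)
    (hxy : x ≠ y) (hyz : y ≠ z) (hxz : x ≠ z) (f : K) :
    demazureLusztig s t x y (demazureLusztig u t y z (demazureLusztig s t x y f)) =
      demazureLusztig u t y z (demazureLusztig s t x y (demazureLusztig u t y z f)) := by
  simp only [demazureLusztig, map_add, map_sub, map_mul, map_div₀, map_one, hss, huu, hsus,
    hsx, hsy, hsz, hst, hux, huy, huz, hut]
  have hxy' : x - y ≠ 0 := sub_ne_zero.2 hxy
  have hyz' : y - z ≠ 0 := sub_ne_zero.2 hyz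
  have hxz' : x - z ≠ 0 := sub_ne_zero.2 hxz
  field_simp
  ring

end

theorem swapK_XV {N : ℕ} (i j k : Fin N) : swapK i j (XV k) = XV (Equiv.swap i j k) := by
  rw [XV, swapK_algebraMap, rename_X, XV]

theorem swapK_swapK {N : ℕ} (i j : Fin N) (f : KK N) : swapK i j (swapK i j f) = f := by
  suffices (swapK i j).comp (swapK i j) = RingHom.id (KK N) from RingHom.congr_fun this f
  refine IsFractionRing.ringHom_ext (A := MvPolynomial (Fin N) Ft) fun p => ?_
  simp only [RingHom.comp_apply, RingHom.id_apply, swapK_algebraMap, rename_rename,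
    ← Equiv.Perm.coe_mul, Equiv.swap_mul_self, Equiv.Perm.coe_one, rename_id, AlgHom.id_apply]

theorem swapK_braid {N : ℕ} {a b c : Fin N} (hab : a ≠ b) (hac : a ≠ c) (hbc : b ≠ c)
    (f : KK N) : swapK b c (swapK a b (swapK b c f)) = swapK a b (swapK b c (swapK a b f)) := by
  suffices (swapK b c).comp ((swapK a b).comp (swapK b c)) =
      (swapK a b).comp ((swapK b c).comp (swapK a b)) from RingHom.congr_fun this f
  refine IsFractionRing.ringHom_ext (A := MvPolynomial (Fin N) Ft) fun p => ?_
  simp only [RingHom.comp_apply, swapK_algebraMap, rename_rename, ← Equiv.Perm.coe_mul]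
  rw [← mul_assoc, ← mul_assoc, Equiv.swap_mul_swap_mul_swap hab hac, Equiv.swap_comm b c,
    Equiv.swap_comm a b, Equiv.swap_mul_swap_mul_swap hbc.symm hac.symm, Equiv.swap_comm]

/-- braid relation for the Demazure–Lusztig operators:
`T_i (T_{i+1} (T_i f)) = T_{i+1} (T_i (T_{i+1} f))` for every polynomial `f`
in `x_1, …, x_N` over `ℚ(t)` (indices 0-based, so `i + 2 < N`). -/
theorem heckeT_braid (N i : ℕ) (hi : i + 2 < N)
    (f : MvPolynomial (Fin N) Ft) :
    TT ⟨i, by omega⟩ ⟨i + 1, by omega⟩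
        (TT ⟨i + 1, by omega⟩ ⟨i + 2, hi⟩
          (TT ⟨i, by omega⟩ ⟨i + 1, by omega⟩ (toK f))) =
      TT ⟨i + 1, by omega⟩ ⟨i + 2, hi⟩
        (TT ⟨i, by omega⟩ ⟨i + 1, by omega⟩
          (TT ⟨i + 1, by omega⟩ ⟨i + 2, hi⟩ (toK f))) := by
  set a : Fin N := ⟨i, by omega⟩
  set b : Fin N := ⟨i + 1, by omega⟩
  set c : Fin N := ⟨i + 2, hi⟩
  have hab : a ≠ b := by simp [a, b, Fin.ext_iff]
  have hac : a ≠ c := by simp [a, c, Fin.ext_iff]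
  have hbc : b ≠ c := by simp [b, c, Fin.ext_iff]
  refine demazureLusztig_braid (swapK a b) (swapK b c) (swapK_swapK a b) (swapK_swapK b c)
    (swapK_braid hab hac hbc) ?_ ?_ ?_ (swapK_tp a b) ?_ ?_ ?_ (swapK_tp b c)
    (XV_injective.ne hab) (XV_injective.ne hbc) (XV_injective.ne hac) (toK f)
  all_goals rw [swapK_XV]; congr 1
  exacts [Equiv.swap_apply_left a b, Equiv.swap_apply_right a b,
    Equiv.swap_apply_of_ne_of_ne hac.symm hbc.symm, Equiv.swap_apply_of_ne_of_ne hab hac,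
    Equiv.swap_apply_left b c, Equiv.swap_apply_right b c]

end
end
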